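/- arXiv:0801.0621 — 2 statements merged into one kernel-verified Lean document; each statement's English description precedes it below -/
import Mathlib

section
/- Let the notation be as in the context. Then the elements of E*_0 D E*_0 mutually commute; that is, for all X, Y ∈ D one has (E*_0 X E*_0)(E*_0 Y E*_0) = (E*_0 Y E*_0)(E*_0 X E*_0) in End(V). -/
open Module Polynomial TensorProduct

set_option synthInstance.maxHeartbeats 1000000
set_option maxHeartbeats 1000000

noncomputable section

/-- A tridiagonal system on `V`: a tridiagonal pair `A, Astar` together with
orderings `θ, θstar` of their eigenvalues whose eigenspace orderings are standard,
and the corresponding primitive idempotents `E, Estar`. -/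
structure TDSystem (K : Type*) (V : Type*) [Field K] [AddCommGroup V] [Module K V] where
  d : ℕ
  A : Module.End K V
  Astar : Module.End K V
  θ : Fin (d+1) → K
  θstar : Fin (d+1) → K
  E : Fin (d+1) → Module.End K V
  Estar : Fin (d+1) → Module.End K V
  theta_inj : Function.Injective θ
  thetastar_inj : Function.Injective θstar
  eig_ne_bot : ∀ i, A.eigenspace (θ i) ≠ ⊥
  eigstar_ne_bot : ∀ i, Astar.eigenspace (θstar i) ≠ ⊥
  sup_eig : (⨆ i, A.eigenspace (θ i)) = ⊤
  sup_eigstar : (⨆ i, Astar.eigenspace (θstar i)) = ⊤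
  tridiag : ∀ i : Fin (d+1), ∀ v ∈ A.eigenspace (θ i),
      Astar v ∈ ⨆ j ∈ {j : Fin (d+1) | i.1 ≤ j.1 + 1 ∧ j.1 ≤ i.1 + 1},
        A.eigenspace (θ j)
  tridiagstar : ∀ i : Fin (d+1), ∀ v ∈ Astar.eigenspace (θstar i),
      A v ∈ ⨆ j ∈ {j : Fin (d+1) | i.1 ≤ j.1 + 1 ∧ j.1 ≤ i.1 + 1},
        Astar.eigenspace (θstar j)
  irred : ∀ W : Submodule K V, (∀ v ∈ W, A v ∈ W) → (∀ v ∈ W, Astar v ∈ W) →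
      W = ⊥ ∨ W = ⊤
  E_on_eig : ∀ i, ∀ v ∈ A.eigenspace (θ i), E i v = v
  E_off_eig : ∀ i j, j ≠ i → ∀ v ∈ A.eigenspace (θ j), E i v = 0
  Estar_on_eig : ∀ i, ∀ v ∈ Astar.eigenspace (θstar i), Estar i v = v
  Estar_off_eig : ∀ i j, j ≠ i → ∀ v ∈ Astar.eigenspace (θstar j), Estar i v = 0
  E_mem_adjoin : ∀ i, E i ∈ Algebra.adjoin K {A}
  Estar_mem_adjoin : ∀ i, Estar i ∈ Algebra.adjoin K {Astar}

namespace TDSystem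

variable {K V : Type*} [Field K] [AddCommGroup V] [Module K V] (S : TDSystem K V)

/-- The subalgebra `D` of `End(V)` generated by `A`. -/
def Dalg : Subalgebra K (Module.End K V) := Algebra.adjoin K {S.A}

/-- The subalgebra `D*` of `End(V)` generated by `Astar`. -/
def DstarAlg : Subalgebra K (Module.End K V) := Algebra.adjoin K {S.Astar}

/-- `A` as an element of `D`. -/
def a : S.Dalg := ⟨S.A, Algebra.self_mem_adjoin_singleton K S.A⟩

/-- `Astar` as an element of `D*`. -/
def astar : S.DstarAlg := ⟨S.Astar, Algebra.self_mem_adjoin_singleton K S.Astar⟩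

/-- `E i` as an element of `D`. -/
def Eelt (i : Fin (S.d+1)) : S.Dalg := ⟨S.E i, S.E_mem_adjoin i⟩

/-- `Estar i` as an element of `D*`. -/
def EstarElt (i : Fin (S.d+1)) : S.DstarAlg := ⟨S.Estar i, S.Estar_mem_adjoin i⟩

open Fin.NatCast in
/-- `τ_i = (λ−θ_0)(λ−θ_1)⋯(λ−θ_{i−1})`. -/
def tau (i : ℕ) : Polynomial K := ∏ h ∈ Finset.range i, (X - C (S.θ h))

open Fin.NatCast in
/-- `η_i = (λ−θ_d)(λ−θ_{d−1})⋯(λ−θ_{d−i+1})`. -/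
def eta (i : ℕ) : Polynomial K := ∏ h ∈ Finset.range i, (X - C (S.θ ((S.d - h : ℕ))))

open Fin.NatCast in
/-- `τ*_i = (λ−θ*_0)(λ−θ*_1)⋯(λ−θ*_{i−1})`. -/
def tauStar (i : ℕ) : Polynomial K := ∏ h ∈ Finset.range i, (X - C (S.θstar h))

open Fin.NatCast in
/-- `η*_i = (λ−θ*_d)(λ−θ*_{d−1})⋯(λ−θ*_{d−i+1})`. -/
def etaStar (i : ℕ) : Polynomial K := ∏ h ∈ Finset.range i, (X - C (S.θstar ((S.d - h : ℕ))))

/-- The triple tensor product `D ⊗ D* ⊗ D` over `K`. -/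
abbrev TT := (↥S.Dalg) ⊗[K] (↥S.DstarAlg) ⊗[K] (↥S.Dalg)

/-- `τ*_t(A*)` as an element of `D*`. -/
def tauStarA (t : ℕ) : S.DstarAlg := Polynomial.aeval S.astar (S.tauStar t)

/-- The subspace `Span{A^i ⊗ E*_j | 0 ≤ i < j ≤ d} ⊗ D` of `D ⊗ D* ⊗ D`. -/
def Lspace : Submodule K S.TT :=
  Submodule.span K {x | ∃ (i : ℕ) (j : Fin (S.d+1)) (Z : S.Dalg),
    i < j.1 ∧ x = (S.a ^ i) ⊗ₜ[K] (S.EstarElt j) ⊗ₜ[K] Z}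

/-- The subspace `D ⊗ Span{E*_j ⊗ A^i | 0 ≤ i < j ≤ d}` of `D ⊗ D* ⊗ D`. -/
def Rright : Submodule K S.TT :=
  Submodule.span K {x | ∃ (X : S.Dalg) (i : ℕ) (j : Fin (S.d+1)),
    i < j.1 ∧ x = X ⊗ₜ[K] (S.EstarElt j) ⊗ₜ[K] (S.a ^ i)}

/-- The subspace `Span{E_i ⊗ (A*)^t ⊗ E_j | 0 ≤ i,j,t ≤ d, t < |i−j|}`. -/
def Mspace : Submodule K S.TT :=
  Submodule.span K {x | ∃ (i j : Fin (S.d+1)) (t : ℕ),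
    t ≤ S.d ∧ t < Nat.dist i.1 j.1 ∧ x = (S.Eelt i) ⊗ₜ[K] (S.astar ^ t) ⊗ₜ[K] (S.Eelt j)}

/-- The subspace `R` of `D ⊗ D* ⊗ D`. -/
def Rspace : Submodule K S.TT := S.Lspace ⊔ S.Rright ⊔ S.Mspace

/-- The subspace `D ⊗ Kτ*_t(A*) ⊗ D` of `D ⊗ D* ⊗ D`. -/
def middleSub (t : ℕ) : Submodule K S.TT :=
  Submodule.span K {x | ∃ (X Z : S.Dalg), x = X ⊗ₜ[K] (S.tauStarA t) ⊗ₜ[K] Z}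

/-- The subspace `R_t = R ∩ (D ⊗ Kτ*_t(A*) ⊗ D)`. -/
def Rt (t : ℕ) : Submodule K S.TT := S.Rspace ⊓ S.middleSub t

/-- The subspace `Span{A^i | 0 ≤ i < t} ⊗ Kτ*_t(A*) ⊗ D`. -/
def Lt (t : ℕ) : Submodule K S.TT :=
  Submodule.span K {x | ∃ (i : ℕ) (Z : S.Dalg),
    i < t ∧ x = (S.a ^ i) ⊗ₜ[K] (S.tauStarA t) ⊗ₜ[K] Z}

/-- The subspace `D ⊗ Kτ*_t(A*) ⊗ Span{A^i | 0 ≤ i < t}`. -/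
def Rrt (t : ℕ) : Submodule K S.TT :=
  Submodule.span K {x | ∃ (X : S.Dalg) (i : ℕ),
    i < t ∧ x = X ⊗ₜ[K] (S.tauStarA t) ⊗ₜ[K] (S.a ^ i)}

/-- The subspace `Span{E_i ⊗ τ*_t(A*) ⊗ E_j | 0 ≤ i,j ≤ d, t < |i−j|}`. -/
def Mt (t : ℕ) : Submodule K S.TT :=
  Submodule.span K {x | ∃ (i j : Fin (S.d+1)),
    t < Nat.dist i.1 j.1 ∧ x = (S.Eelt i) ⊗ₜ[K] (S.tauStarA t) ⊗ₜ[K] (S.Eelt j)}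

end TDSystem

variable {K V : Type*} [Field K] [AddCommGroup V] [Module K V]






section General

variable {d : ℕ} (B B' : Module.End K V) (μ : Fin (d + 1) → K)
  (F : Fin (d + 1) → Module.End K V)

lemma td_ext0 (hsup : (⨆ i, B.eigenspace (μ i)) = ⊤) {T : Module.End K V}
    (h : ∀ i, ∀ v ∈ B.eigenspace (μ i), T v = 0) : T = 0 := by
  have h2 : ⊤ ≤ LinearMap.ker T := by
    rw [← hsup]
    refine iSup_le fun i => ?_
    intro v hv
    exact LinearMap.mem_ker.mpr (h i v hv)
  exact LinearMap.ker_eq_top.mp (top_le_iff.mp h2)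

lemma td_pow_apply (t : ℕ) (i : Fin (d + 1)) (v : V) (hv : v ∈ B.eigenspace (μ i)) :
    (B ^ t) v = μ i ^ t • v := by
  induction t with
  | zero => simp
  | succ t ih =>
    have hBv : B v = μ i • v := Module.End.mem_eigenspace_iff.mp hv
    rw [pow_succ', Module.End.mul_apply, ih, map_smul, hBv, smul_smul, ← pow_succ]

lemma td_aeval_apply (q : Polynomial K) (i : Fin (d + 1)) (v : V)
    (hv : v ∈ B.eigenspace (μ i)) :
    (Polynomial.aeval B q) v = q.eval (μ i) • v := by
  induction q using Polynomial.induction_on' with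
  | add p r hp hr => rw [map_add, LinearMap.add_apply, hp, hr, eval_add, add_smul]
  | monomial t c =>
    rw [aeval_monomial, eval_monomial, Module.End.mul_apply, td_pow_apply B μ t i v hv,
      map_smul, Module.algebraMap_end_apply, smul_smul, mul_comm]


lemma td_aeval_mul_F (hsup : (⨆ i, B.eigenspace (μ i)) = ⊤)
    (hon : ∀ i, ∀ v ∈ B.eigenspace (μ i), F i v = v)
    (hoff : ∀ i j, j ≠ i → ∀ v ∈ B.eigenspace (μ j), F i v = 0)
    (q : Polynomial K) (i : Fin (d + 1)) :
    Polynomial.aeval B q * F i = q.eval (μ i) • F i := by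
  refine sub_eq_zero.mp (td_ext0 B μ hsup ?_)
  intro j v hv
  rw [LinearMap.sub_apply, Module.End.mul_apply, LinearMap.smul_apply]
  by_cases hji : j = i
  · subst hji
    rw [hon j v hv, td_aeval_apply B μ q j v hv, sub_self]
  · rw [hoff i j hji v hv, map_zero, smul_zero, sub_self]

lemma td_F_mul_aeval (hsup : (⨆ i, B.eigenspace (μ i)) = ⊤)
    (hon : ∀ i, ∀ v ∈ B.eigenspace (μ i), F i v = v)
    (hoff : ∀ i j, j ≠ i → ∀ v ∈ B.eigenspace (μ j), F i v = 0)
    (q : Polynomial K) (i : Fin (d + 1)) :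
    F i * Polynomial.aeval B q = q.eval (μ i) • F i := by
  refine sub_eq_zero.mp (td_ext0 B μ hsup ?_)
  intro j v hv
  rw [LinearMap.sub_apply, Module.End.mul_apply, LinearMap.smul_apply,
    td_aeval_apply B μ q j v hv, map_smul]
  by_cases hji : j = i
  · subst hji
    rw [hon j v hv, sub_self]
  · rw [hoff i j hji v hv, smul_zero, smul_zero, sub_self]

lemma td_sum_F (hsup : (⨆ i, B.eigenspace (μ i)) = ⊤)
    (hon : ∀ i, ∀ v ∈ B.eigenspace (μ i), F i v = v)
    (hoff : ∀ i j, j ≠ i → ∀ v ∈ B.eigenspace (μ j), F i v = 0) :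
    (∑ i, F i) = 1 := by
  refine sub_eq_zero.mp (td_ext0 B μ hsup ?_)
  intro j v hv
  rw [LinearMap.sub_apply, LinearMap.sum_apply, Module.End.one_apply]
  rw [Finset.sum_eq_single j (fun i _ hij => hoff i j hij.symm v hv)
    (fun h => absurd (Finset.mem_univ j) h), hon j v hv, sub_self]

lemma td_aeval_eq_sum (hsup : (⨆ i, B.eigenspace (μ i)) = ⊤)
    (hon : ∀ i, ∀ v ∈ B.eigenspace (μ i), F i v = v)
    (hoff : ∀ i j, j ≠ i → ∀ v ∈ B.eigenspace (μ j), F i v = 0)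
    (q : Polynomial K) :
    Polynomial.aeval B q = ∑ i, q.eval (μ i) • F i := by
  conv_lhs => rw [← mul_one (Polynomial.aeval B q), ← td_sum_F B μ F hsup hon hoff]
  rw [Finset.mul_sum]
  exact Finset.sum_congr rfl fun i _ => td_aeval_mul_F B μ F hsup hon hoff q i

lemma td_aeval_basis (hsup : (⨆ i, B.eigenspace (μ i)) = ⊤)
    (hon : ∀ i, ∀ v ∈ B.eigenspace (μ i), F i v = v)
    (hoff : ∀ i j, j ≠ i → ∀ v ∈ B.eigenspace (μ j), F i v = 0)
    (hinj : Function.Injective μ) (i : Fin (d + 1)) :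
    Polynomial.aeval B (Lagrange.basis Finset.univ μ i) = F i := by
  rw [td_aeval_eq_sum B μ F hsup hon hoff]
  rw [Finset.sum_eq_single i]
  · rw [Lagrange.eval_basis_self hinj.injOn (Finset.mem_univ i), one_smul]
  · intro j _ hji
    rw [Lagrange.eval_basis_of_ne (Ne.symm hji) (Finset.mem_univ j), zero_smul]
  · intro h; exact absurd (Finset.mem_univ i) h

lemma td_window
    (htri : ∀ i : Fin (d + 1), ∀ v ∈ B.eigenspace (μ i),
      B' v ∈ ⨆ j ∈ {j : Fin (d + 1) | i.1 ≤ j.1 + 1 ∧ j.1 ≤ i.1 + 1}, B.eigenspace (μ j))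
    (t : ℕ) (j : Fin (d + 1)) (v : V) (hv : v ∈ B.eigenspace (μ j)) :
    (B' ^ t) v ∈ ⨆ k ∈ {k : Fin (d + 1) | Nat.dist k.1 j.1 ≤ t}, B.eigenspace (μ k) := by
  induction t with
  | zero =>
    simp only [pow_zero, Module.End.one_apply]
    exact Submodule.mem_iSup_of_mem j (Submodule.mem_iSup_of_mem (by simp [Nat.dist_self]) hv)
  | succ t ih =>
    rw [pow_succ', Module.End.mul_apply]
    have hle : (⨆ k ∈ {k : Fin (d + 1) | Nat.dist k.1 j.1 ≤ t}, B.eigenspace (μ k)) ≤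
        Submodule.comap B' (⨆ k ∈ {k : Fin (d + 1) | Nat.dist k.1 j.1 ≤ t + 1},
          B.eigenspace (μ k)) := by
      refine iSup_le fun k => iSup_le fun hk => ?_
      intro w hw
      simp only [Submodule.mem_comap]
      have h2 : (⨆ l ∈ {l : Fin (d + 1) | k.1 ≤ l.1 + 1 ∧ l.1 ≤ k.1 + 1}, B.eigenspace (μ l)) ≤
          ⨆ l ∈ {l : Fin (d + 1) | Nat.dist l.1 j.1 ≤ t + 1}, B.eigenspace (μ l) := by
        refine iSup_le fun l => iSup_le fun hl => ?_
        have hlk : Nat.dist l.1 k.1 ≤ 1 := by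
          have h1 : k.1 ≤ l.1 + 1 ∧ l.1 ≤ k.1 + 1 := hl
          simp only [Nat.dist]; omega
        have hkj : Nat.dist k.1 j.1 ≤ t := hk
        have hd : Nat.dist l.1 j.1 ≤ t + 1 := by
          have h3 := Nat.dist.triangle_inequality l.1 k.1 j.1
          omega
        exact le_iSup_of_le l (le_iSup_of_le hd le_rfl)
      exact h2 (htri k w hw)
    exact Submodule.mem_comap.mp (hle ih)

lemma td_F_pow_F (hsup : (⨆ i, B.eigenspace (μ i)) = ⊤)
    (hon : ∀ i, ∀ v ∈ B.eigenspace (μ i), F i v = v)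
    (hoff : ∀ i j, j ≠ i → ∀ v ∈ B.eigenspace (μ j), F i v = 0)
    (htri : ∀ i : Fin (d + 1), ∀ v ∈ B.eigenspace (μ i),
      B' v ∈ ⨆ j ∈ {j : Fin (d + 1) | i.1 ≤ j.1 + 1 ∧ j.1 ≤ i.1 + 1}, B.eigenspace (μ j))
    (i j : Fin (d + 1)) (t : ℕ) (ht : t < Nat.dist i.1 j.1) :
    F i * B' ^ t * F j = 0 := by
  refine td_ext0 B μ hsup ?_
  intro k v hv
  rw [Module.End.mul_apply, Module.End.mul_apply]
  by_cases hkj : k = j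
  · subst hkj
    rw [hon k v hv]
    have hw := td_window B B' μ htri t k v hv
    have hker : (⨆ l ∈ {l : Fin (d + 1) | Nat.dist l.1 k.1 ≤ t}, B.eigenspace (μ l)) ≤
        LinearMap.ker (F i) := by
      refine iSup_le fun l => iSup_le fun hl => ?_
      intro w hw'
      have hli : l ≠ i := by
        rintro rfl
        exact (not_le.mpr ht) hl
      exact LinearMap.mem_ker.mpr (hoff i l hli w hw')
    exact LinearMap.mem_ker.mp (hker hw)
  · rw [hoff j k hkj v hv, map_zero, map_zero]

lemma td_F_aeval_F (hsup : (⨆ i, B.eigenspace (μ i)) = ⊤)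
    (hon : ∀ i, ∀ v ∈ B.eigenspace (μ i), F i v = v)
    (hoff : ∀ i j, j ≠ i → ∀ v ∈ B.eigenspace (μ j), F i v = 0)
    (htri : ∀ i : Fin (d + 1), ∀ v ∈ B.eigenspace (μ i),
      B' v ∈ ⨆ j ∈ {j : Fin (d + 1) | i.1 ≤ j.1 + 1 ∧ j.1 ≤ i.1 + 1}, B.eigenspace (μ j))
    (i j : Fin (d + 1)) (q : Polynomial K) (hq : q.degree < (Nat.dist i.1 j.1 : ℕ)) :
    F i * Polynomial.aeval B' q * F j = 0 := by
  by_cases h0 : q = 0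
  · simp [h0]
  · have hnd : q.natDegree < Nat.dist i.1 j.1 :=
      (Polynomial.natDegree_lt_iff_degree_lt h0).mpr hq
    rw [Polynomial.aeval_eq_sum_range]
    rw [Finset.mul_sum, Finset.sum_mul]
    refine Finset.sum_eq_zero fun t htm => ?_
    rw [mul_smul_comm, smul_mul_assoc,
      td_F_pow_F B B' μ F hsup hon hoff htri i j t
        (by have := Finset.mem_range.mp htm; omega), smul_zero]

end General




/-- Sequentially-defined interpolation certificate: `interpSeq ν C ρ j` is the
polynomial of degree `< ρ` interpolating the values `C i j + (interpSeq ν C ρ i).eval (ν j)`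
at the nodes `ν i` for `j - ρ ≤ i < j`. -/
noncomputable def interpSeq (ν : ℕ → K) (C : ℕ → ℕ → K) (ρ : ℕ) (j : ℕ) : Polynomial K :=
  (Lagrange.interpolate (Finset.Ico (j - ρ) j).attach (fun i => ν i.1))
    (fun i => C i.1 j + (interpSeq ν C ρ i.1).eval (ν j))
termination_by j
decreasing_by exact (Finset.mem_Ico.mp i.2).2

lemma interpSeq_degree_lt (ν : ℕ → K) (C : ℕ → ℕ → K) (ρ : ℕ) (j : ℕ)
    (hinj : Set.InjOn (fun i : {x // x ∈ Finset.Ico (j - ρ) j} => ν i.1)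
      ((Finset.Ico (j - ρ) j).attach : Set {x // x ∈ Finset.Ico (j - ρ) j})) :
    (interpSeq ν C ρ j).degree < (ρ : ℕ) := by
  rw [interpSeq]
  refine lt_of_lt_of_le (Lagrange.degree_interpolate_lt _ hinj) ?_
  rw [Finset.card_attach, Nat.card_Ico]
  exact_mod_cast Nat.sub_le_iff_le_add.mpr (by omega)

lemma interpSeq_eval (ν : ℕ → K) (C : ℕ → ℕ → K) (ρ : ℕ) {i j : ℕ}
    (hij : i ∈ Finset.Ico (j - ρ) j)
    (hinj : Set.InjOn (fun i : {x // x ∈ Finset.Ico (j - ρ) j} => ν i.1)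
      ((Finset.Ico (j - ρ) j).attach : Set {x // x ∈ Finset.Ico (j - ρ) j})) :
    (interpSeq ν C ρ j).eval (ν i) = C i j + (interpSeq ν C ρ i).eval (ν j) := by
  conv_lhs => rw [interpSeq]
  exact Lagrange.eval_interpolate_at_node _ hinj (Finset.mem_attach _ ⟨i, hij⟩)

section Helpers

lemma td_zero_mid {x y z : Module.End K V} (h : x * y * z = 0) (w u : Module.End K V) :
    x * (y * z * w) * u = 0 := by
  have e : x * (y * z * w) * u = (x * y * z) * (w * u) := by simp only [mul_assoc]
  rw [e, h, zero_mul]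

lemma td_zero_mid' {y z u : Module.End K V} (h : y * z * u = 0) (x w : Module.End K V) :
    x * (w * y * z) * u = 0 := by
  have e : x * (w * y * z) * u = (x * w) * (y * z * u) := by simp only [mul_assoc]
  rw [e, h, mul_zero]

lemma td_sandwich_smul (cc : K) (X Y Z P Q : Module.End K V) :
    P * (X * (cc • Z) * Y) * Q = cc • (P * (X * Z * Y) * Q) := by
  simp only [mul_smul_comm, smul_mul_assoc]

lemma td_sandwich3_sum {ι : Type*} (s : Finset ι) (cc : ι → K) (g : ι → Module.End K V)
    (X Y P Q : Module.End K V) :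
    P * (X * (∑ i ∈ s, cc i • g i) * Y) * Q = ∑ i ∈ s, cc i • (P * (X * g i * Y) * Q) := by
  simp only [Finset.mul_sum, Finset.sum_mul, mul_smul_comm, smul_mul_assoc]

lemma td_sandwich_sub (M N X Y P Q : Module.End K V) :
    P * (X * (M - N) * Y) * Q = P * (X * M * Y) * Q - P * (X * N * Y) * Q := by
  simp only [mul_sub, sub_mul]

lemma td_expand {ι κ : Type*} (s : Finset ι) (t : Finset κ) (x : ι → K) (y : κ → K)
    (f : ι → Module.End K V) (g : κ → Module.End K V) (P M Q : Module.End K V) :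
    P * ((∑ i ∈ s, x i • f i) * M * (∑ j ∈ t, y j • g j)) * Q
      = ∑ i ∈ s, ∑ j ∈ t, (x i * y j) • (P * (f i * M * g j) * Q) := by
  simp only [Finset.mul_sum, Finset.sum_mul, mul_smul_comm, smul_mul_assoc, smul_smul,
    Finset.smul_sum]
  rw [Finset.sum_comm]
  exact Finset.sum_congr rfl fun i _ => Finset.sum_congr rfl fun j _ => by
    rw [mul_comm (y j) (x i)]

lemma td_sum_left {ι : Type*} (s : Finset ι) (x : ι → K) (f : ι → Module.End K V)
    (M N P Q : Module.End K V) :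
    P * ((∑ i ∈ s, x i • f i) * M * N) * Q = ∑ i ∈ s, x i • (P * (f i * M * N) * Q) := by
  simp only [Finset.mul_sum, Finset.sum_mul, mul_smul_comm, smul_mul_assoc]

lemma td_sum_right {ι : Type*} (s : Finset ι) (x : ι → K) (f : ι → Module.End K V)
    (M N P Q : Module.End K V) :
    P * (N * M * (∑ i ∈ s, x i • f i)) * Q = ∑ i ∈ s, x i • (P * (N * M * f i) * Q) := by
  simp only [Finset.mul_sum, Finset.sum_mul, mul_smul_comm, smul_mul_assoc]

end Helpers

section MainKey

variable (S : TDSystem K V)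

lemma td_key :
    ∀ (m : ℕ) (r : Fin (S.d + 1)), S.d - r.1 < m → ∀ p q : Polynomial K,
      S.Estar 0 * (Polynomial.aeval S.A p * S.Estar r * Polynomial.aeval S.A q
        - Polynomial.aeval S.A q * S.Estar r * Polynomial.aeval S.A p) * S.Estar 0 = 0 := by
  intro m
  induction m with
  | zero => exact fun r hr => absurd hr (by omega)
  | succ m ih =>
    intro r hr p q
    have hAsum : ∀ qq : Polynomial K,
        Polynomial.aeval S.A qq = ∑ i, qq.eval (S.θ i) • S.E i :=
      td_aeval_eq_sum S.A S.θ S.E S.sup_eig S.E_on_eig S.E_off_eig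
    have hSsum : ∀ qq : Polynomial K,
        Polynomial.aeval S.Astar qq = ∑ i, qq.eval (S.θstar i) • S.Estar i :=
      td_aeval_eq_sum S.Astar S.θstar S.Estar S.sup_eigstar S.Estar_on_eig S.Estar_off_eig
    have hEsEs : ∀ (i j : Fin (S.d + 1)) (qq : Polynomial K),
        qq.degree < (Nat.dist i.1 j.1 : ℕ) →
          S.Estar i * Polynomial.aeval S.A qq * S.Estar j = 0 :=
      fun i j qq hq => td_F_aeval_F S.Astar S.A S.θstar S.Estar S.sup_eigstar S.Estar_on_eig
        S.Estar_off_eig S.tridiagstar i j qq hq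
    have hEE : ∀ (i j : Fin (S.d + 1)) (qq : Polynomial K),
        qq.degree < (Nat.dist i.1 j.1 : ℕ) →
          S.E i * Polynomial.aeval S.Astar qq * S.E j = 0 :=
      fun i j qq hq => td_F_aeval_F S.A S.Astar S.θ S.E S.sup_eig S.E_on_eig
        S.E_off_eig S.tridiag i j qq hq
    have hEbasis : ∀ i : Fin (S.d + 1),
        Polynomial.aeval S.A (Lagrange.basis Finset.univ S.θ i) = S.E i :=
      td_aeval_basis S.A S.θ S.E S.sup_eig S.E_on_eig S.E_off_eig S.theta_inj
    have hApow : ∀ e : ℕ, S.A ^ e = ∑ i, S.θ i ^ e • S.E i := by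
      intro e
      have h := hAsum (X ^ e)
      simpa using h
    have IH : ∀ r' : Fin (S.d + 1), r.1 < r'.1 → ∀ (i j : Fin (S.d + 1)),
        S.Estar 0 * (S.E i * S.Estar r' * S.E j) * S.Estar 0
          = S.Estar 0 * (S.E j * S.Estar r' * S.E i) * S.Estar 0 := by
      intro r' hr' i j
      have h := ih r' (by have := r'.isLt; omega) (Lagrange.basis Finset.univ S.θ i)
        (Lagrange.basis Finset.univ S.θ j)
      rw [hEbasis, hEbasis] at h
      rw [mul_sub, sub_mul] at h
      exact sub_eq_zero.mp h
    have mono : ∀ a b : ℕ, S.Estar 0 * (S.A ^ a * S.Estar r * S.A ^ b) * S.Estar 0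
        = S.Estar 0 * (S.A ^ b * S.Estar r * S.A ^ a) * S.Estar 0 := by
      have main : ∀ a b : ℕ, b < a →
          S.Estar 0 * (S.A ^ a * S.Estar r * S.A ^ b) * S.Estar 0
            = S.Estar 0 * (S.A ^ b * S.Estar r * S.A ^ a) * S.Estar 0 := by
        intro a b hba
        by_cases hbr : b < r.1
        · have h1 : S.Estar r * S.A ^ b * S.Estar 0 = 0 := by
            have h := hEsEs r 0 (X ^ b) (by
              simp only [Polynomial.degree_X_pow, Fin.val_zero, Nat.dist_zero_right]
              exact_mod_cast hbr)
            simpa using h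
          have h2 : S.Estar 0 * S.A ^ b * S.Estar r = 0 := by
            have h := hEsEs 0 r (X ^ b) (by
              simp only [Polynomial.degree_X_pow, Fin.val_zero, Nat.dist_zero_left]
              exact_mod_cast hbr)
            simpa using h
          rw [td_zero_mid' h1 (S.Estar 0) (S.A ^ a), td_zero_mid h2 (S.A ^ a) (S.Estar 0)]
        · push_neg at hbr
          have hdlt : ∀ x : ℕ, min x S.d < S.d + 1 := fun x => by omega
          set ν : ℕ → K := fun x => S.θ ⟨min x S.d, hdlt x⟩ with hν
          have hνval : ∀ i : Fin (S.d + 1), ν i.1 = S.θ i := by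
            intro i
            show S.θ _ = S.θ i
            congr 1
            exact Fin.ext (by simp only [Nat.min_eq_left (Nat.lt_succ_iff.mp i.isLt)])
          set Cν : ℕ → ℕ → K := fun x y => ν x ^ a * ν y ^ b - ν x ^ b * ν y ^ a with hCν
          set pp : ℕ → Polynomial K := interpSeq ν Cν r.1 with hpp
          have hinj : ∀ j : ℕ, j ≤ S.d →
              Set.InjOn (fun i : {x // x ∈ Finset.Ico (j - r.1) j} => ν i.1)
                ((Finset.Ico (j - r.1) j).attach : Set _) := by
            intro j hj x _ y _ hxy
            have hx : x.1 < j := (Finset.mem_Ico.mp x.2).2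
            have hy : y.1 < j := (Finset.mem_Ico.mp y.2).2
            simp only [hν] at hxy
            have h2 : (⟨min x.1 S.d, hdlt x.1⟩ : Fin (S.d + 1))
                = ⟨min y.1 S.d, hdlt y.1⟩ := S.theta_inj hxy
            have hval := congrArg Fin.val h2
            simp only [Nat.min_eq_left (by omega : x.1 ≤ S.d),
              Nat.min_eq_left (by omega : y.1 ≤ S.d)] at hval
            exact Subtype.ext hval
          have hdeg : ∀ j : ℕ, j ≤ S.d → (pp j).degree < ((r.1 : ℕ) : WithBot ℕ) := fun j hj =>
            interpSeq_degree_lt ν Cν r.1 j (hinj j hj)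
          have heval : ∀ i j : ℕ, j ≤ S.d → i ∈ Finset.Ico (j - r.1) j →
              (pp j).eval (ν i) = Cν i j + (pp i).eval (ν j) := fun i j hj hij =>
            interpSeq_eval ν Cν r.1 hij (hinj j hj)
          set Fc : Fin (S.d + 1) → Fin (S.d + 1) → K := fun i j =>
            (S.θ i ^ a * S.θ j ^ b - S.θ i ^ b * S.θ j ^ a)
              - (pp j.1).eval (S.θ i) + (pp i.1).eval (S.θ j) with hFc
          have hFcnear : ∀ i j : Fin (S.d + 1), Nat.dist i.1 j.1 ≤ r.1 → Fc i j = 0 := by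
            intro i j hd
            simp only [Nat.dist] at hd
            rcases lt_trichotomy i.1 j.1 with h | h | h
            · have hmem : i.1 ∈ Finset.Ico (j.1 - r.1) j.1 := Finset.mem_Ico.mpr ⟨by omega, h⟩
              have he := heval i.1 j.1 (Nat.lt_succ_iff.mp j.isLt) hmem
              simp only [hCν] at he
              rw [hνval i, hνval j] at he
              simp only [hFc]
              rw [he]
              ring
            · have hij : i = j := Fin.ext h
              subst hij
              simp only [hFc]
              ring
            · have hmem : j.1 ∈ Finset.Ico (i.1 - r.1) i.1 := Finset.mem_Ico.mpr ⟨by omega, h⟩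
              have he := heval j.1 i.1 (Nat.lt_succ_iff.mp i.isLt) hmem
              simp only [hCν] at he
              rw [hνval j, hνval i] at he
              simp only [hFc]
              rw [he]
              ring
          have hGfar : ∀ i j : Fin (S.d + 1), r.1 < Nat.dist i.1 j.1 →
              S.Estar 0 * (S.E i * S.Estar r * S.E j) * S.Estar 0
                = S.Estar 0 * (S.E j * S.Estar r * S.E i) * S.Estar 0 := by
            intro i j hfar
            set c : Fin (S.d + 1) → K := fun r' => (S.tauStar r.1).eval (S.θstar r') with hc
            have hcr : c r ≠ 0 := by
              simp only [hc, TDSystem.tauStar, Polynomial.eval_prod, Polynomial.eval_sub,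
                Polynomial.eval_X, Polynomial.eval_C]
              refine Finset.prod_ne_zero_iff.mpr fun h hh => sub_ne_zero.mpr fun heq => ?_
              have hlt : h < S.d + 1 := by
                have h1 := Finset.mem_range.mp hh
                have h2 := r.isLt
                omega
              open Fin.NatCast in
              have h2 : r = ((h : ℕ) : Fin (S.d + 1)) := S.thetastar_inj heq
              have h3 := congrArg Fin.val h2
              rw [Fin.val_cast_of_lt hlt] at h3
              have h4 := Finset.mem_range.mp hh
              omega
            have hc0 : ∀ r' : Fin (S.d + 1), r'.1 < r.1 → c r' = 0 := by
              intro r' hr'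
              simp only [hc, TDSystem.tauStar]
              rw [Polynomial.eval_prod]
              refine Finset.prod_eq_zero (Finset.mem_range.mpr hr') ?_
              rw [Polynomial.eval_sub, Polynomial.eval_X, Polynomial.eval_C,
                Fin.cast_val_eq_self, sub_self]
            have hτdeg : (S.tauStar r.1).degree = ((r.1 : ℕ) : WithBot ℕ) := by
              rw [TDSystem.tauStar, Polynomial.degree_prod]
              rw [Finset.sum_congr rfl fun h _ => Polynomial.degree_X_sub_C _]
              simp
            have hτ0 : ∀ i' j' : Fin (S.d + 1), r.1 < Nat.dist i'.1 j'.1 →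
                S.E i' * Polynomial.aeval S.Astar (S.tauStar r.1) * S.E j' = 0 := by
              intro i' j' hf
              refine hEE i' j' _ ?_
              rw [hτdeg]
              exact_mod_cast hf
            have hsm : c r • S.Estar r = Polynomial.aeval S.Astar (S.tauStar r.1)
                - ∑ r' ∈ Finset.univ.erase r, c r' • S.Estar r' := by
              rw [hSsum (S.tauStar r.1),
                ← Finset.add_sum_erase Finset.univ _ (Finset.mem_univ r)]
              simp only [hc]
              exact (add_sub_cancel_right _ _).symm
            have key3 : ∀ r' ∈ Finset.univ.erase r,
                c r' • (S.Estar 0 * (S.E i * S.Estar r' * S.E j) * S.Estar 0)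
                  = c r' • (S.Estar 0 * (S.E j * S.Estar r' * S.E i) * S.Estar 0) := by
              intro r' hr'
              rcases lt_trichotomy r'.1 r.1 with h | h | h
              · rw [hc0 r' h, zero_smul, zero_smul]
              · exact absurd (Fin.ext h) (Finset.mem_erase.mp hr').1
              · rw [IH r' h i j]
            have e1 : ∀ i' j' : Fin (S.d + 1), r.1 < Nat.dist i'.1 j'.1 →
                c r • (S.Estar 0 * (S.E i' * S.Estar r * S.E j') * S.Estar 0)
                  = - ∑ r' ∈ Finset.univ.erase r,
                      c r' • (S.Estar 0 * (S.E i' * S.Estar r' * S.E j') * S.Estar 0) := by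
              intro i' j' hf
              rw [← td_sandwich_smul (c r) (S.E i') (S.E j') (S.Estar r) (S.Estar 0) (S.Estar 0)]
              rw [hsm, td_sandwich_sub, td_sandwich3_sum, hτ0 i' j' hf]
              simp
            have h12 : c r • (S.Estar 0 * (S.E i * S.Estar r * S.E j) * S.Estar 0)
                = c r • (S.Estar 0 * (S.E j * S.Estar r * S.E i) * S.Estar 0) := by
              rw [e1 i j hfar, e1 j i (by rw [Nat.dist_comm]; exact hfar)]
              exact neg_inj.mpr (Finset.sum_congr rfl key3)
            exact smul_right_injective (Module.End K V) hcr h12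
          -- now expand the goal
          rw [hApow a, hApow b, td_expand, td_expand, ← sub_eq_zero]
          rw [← Finset.sum_sub_distrib]
          simp only [← Finset.sum_sub_distrib, ← sub_smul]
          have hsplit : ∀ i j : Fin (S.d + 1),
              (S.θ i ^ a * S.θ j ^ b - S.θ i ^ b * S.θ j ^ a)
                = (pp j.1).eval (S.θ i) + ((-(pp i.1).eval (S.θ j)) + Fc i j) := by
            intro i j
            simp only [hFc]
            ring
          calc (∑ i, ∑ j, (S.θ i ^ a * S.θ j ^ b - S.θ i ^ b * S.θ j ^ a) •
                  (S.Estar 0 * (S.E i * S.Estar r * S.E j) * S.Estar 0))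
              = ∑ i, ∑ j, (((pp j.1).eval (S.θ i)) •
                    (S.Estar 0 * (S.E i * S.Estar r * S.E j) * S.Estar 0)
                  + ((-(pp i.1).eval (S.θ j)) •
                      (S.Estar 0 * (S.E i * S.Estar r * S.E j) * S.Estar 0)
                    + Fc i j • (S.Estar 0 * (S.E i * S.Estar r * S.E j) * S.Estar 0))) := by
                refine Finset.sum_congr rfl fun i _ => Finset.sum_congr rfl fun j _ => ?_
                rw [hsplit i j, add_smul, add_smul]
            _ = (∑ i, ∑ j, ((pp j.1).eval (S.θ i)) •
                    (S.Estar 0 * (S.E i * S.Estar r * S.E j) * S.Estar 0))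
                + ((∑ i, ∑ j, (-(pp i.1).eval (S.θ j)) •
                    (S.Estar 0 * (S.E i * S.Estar r * S.E j) * S.Estar 0))
                  + ∑ i, ∑ j, Fc i j •
                    (S.Estar 0 * (S.E i * S.Estar r * S.E j) * S.Estar 0)) := by
                simp only [Finset.sum_add_distrib]
            _ = 0 := by
                have hS1 : (∑ i, ∑ j, ((pp j.1).eval (S.θ i)) •
                    (S.Estar 0 * (S.E i * S.Estar r * S.E j) * S.Estar 0)) = 0 := by
                  rw [Finset.sum_comm]
                  refine Finset.sum_eq_zero fun j _ => ?_
                  rw [← td_sum_left, ← hAsum (pp j.1)]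
                  refine td_zero_mid (hEsEs 0 r (pp j.1) ?_) (S.E j) (S.Estar 0)
                  have h := hdeg j.1 (Nat.lt_succ_iff.mp j.isLt)
                  simpa [Fin.val_zero, Nat.dist_zero_left] using h
                have hS2 : (∑ i, ∑ j, (-(pp i.1).eval (S.θ j)) •
                    (S.Estar 0 * (S.E i * S.Estar r * S.E j) * S.Estar 0)) = 0 := by
                  refine Finset.sum_eq_zero fun i _ => ?_
                  simp only [neg_smul]
                  rw [Finset.sum_neg_distrib]
                  rw [← td_sum_right, ← hAsum (pp i.1)]
                  rw [td_zero_mid' (hEsEs r 0 (pp i.1) ?_) (S.Estar 0) (S.E i), neg_zero]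
                  have h := hdeg i.1 (Nat.lt_succ_iff.mp i.isLt)
                  simpa [Fin.val_zero, Nat.dist_zero_right] using h
                have hS3 : (∑ i, ∑ j, Fc i j •
                    (S.Estar 0 * (S.E i * S.Estar r * S.E j) * S.Estar 0)) = 0 := by
                  rw [← Finset.sum_product']
                  refine Finset.sum_ninvolution Prod.swap ?_ ?_
                    (fun x => Finset.mem_product.mpr ⟨Finset.mem_univ _, Finset.mem_univ _⟩)
                    (fun x => Prod.swap_swap x)
                  · rintro ⟨i, j⟩
                    simp only [Prod.swap, Prod.fst, Prod.snd]
                    by_cases hdist : Nat.dist i.1 j.1 ≤ r.1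
                    · rw [hFcnear i j hdist,
                        hFcnear j i (by rw [Nat.dist_comm]; exact hdist),
                        zero_smul, zero_smul, add_zero]
                    · push_neg at hdist
                      have hsym := hGfar i j hdist
                      have hFanti : Fc j i = -Fc i j := by simp only [hFc]; ring
                      rw [hFanti, ← hsym, neg_smul, add_neg_cancel]
                  · rintro ⟨i, j⟩ hfx heq
                    have hji : j = i := congrArg Prod.fst heq
                    subst hji
                    exact hfx (by rw [hFcnear j j (by simp [Nat.dist_self]), zero_smul])
                rw [hS1, hS2, hS3, add_zero, add_zero]
      intro a b
      rcases lt_trichotomy a b with h | h | h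
      · exact (main b a h).symm
      · subst h; rfl
      · exact main a b h
    rw [mul_sub, sub_mul, sub_eq_zero]
    rw [Polynomial.aeval_eq_sum_range (p := p), Polynomial.aeval_eq_sum_range (p := q)]
    rw [td_expand, td_expand]
    conv_rhs => rw [Finset.sum_comm]
    refine Finset.sum_congr rfl fun t _ => Finset.sum_congr rfl fun u _ => ?_
    rw [mono t u, mul_comm (p.coeff t) (q.coeff u)]

end MainKey

/-- The elements of `E*₀ D E*₀` mutually commute. -/
theorem EDE_commute
    [FiniteDimensional K V] (hV : 0 < Module.finrank K V) (S : TDSystem K V) :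
    ∀ X ∈ S.Dalg, ∀ Y ∈ S.Dalg,
      (S.Estar 0 * X * S.Estar 0) * (S.Estar 0 * Y * S.Estar 0) =
        (S.Estar 0 * Y * S.Estar 0) * (S.Estar 0 * X * S.Estar 0) := by
  intro X hX Y hY
  have hX' : X ∈ (Polynomial.aeval (R := K) S.A).range := by
    rw [← Algebra.adjoin_singleton_eq_range_aeval]
    exact hX
  have hY' : Y ∈ (Polynomial.aeval (R := K) S.A).range := by
    rw [← Algebra.adjoin_singleton_eq_range_aeval]
    exact hY
  obtain ⟨px, hpx⟩ := (AlgHom.mem_range _).mp hX'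
  obtain ⟨py, hpy⟩ := (AlgHom.mem_range _).mp hY'
  have hPP : S.Estar 0 * S.Estar 0 = S.Estar 0 := by
    refine sub_eq_zero.mp (td_ext0 S.Astar S.θstar S.sup_eigstar ?_)
    intro k v hv
    rw [LinearMap.sub_apply, Module.End.mul_apply]
    by_cases hk : k = 0
    · subst hk
      rw [S.Estar_on_eig 0 v hv, S.Estar_on_eig 0 v hv, sub_self]
    · rw [S.Estar_off_eig 0 k hk v hv, map_zero, sub_self]
  have hkey := td_key S (S.d + 1) 0 (by simp only [Fin.val_zero]; omega) px py
  rw [hpx, hpy, mul_sub, sub_mul] at hkey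
  have heq := sub_eq_zero.mp hkey
  have hPP' : ∀ Z : Module.End K V, S.Estar 0 * (S.Estar 0 * Z) = S.Estar 0 * Z := by
    intro Z
    rw [← mul_assoc, hPP]
  calc (S.Estar 0 * X * S.Estar 0) * (S.Estar 0 * Y * S.Estar 0)
      = S.Estar 0 * (X * S.Estar 0 * Y) * S.Estar 0 := by
        simp only [mul_assoc, hPP']
    _ = S.Estar 0 * (Y * S.Estar 0 * X) * S.Estar 0 := heq
    _ = (S.Estar 0 * Y * S.Estar 0) * (S.Estar 0 * X * S.Estar 0) := by
        simp only [mul_assoc, hPP']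

end
end

section
/- Let the notation be as in the context. Then R is contained in the kernel of π. -/
open Module Polynomial TensorProduct

set_option synthInstance.maxHeartbeats 1000000
set_option maxHeartbeats 1000000

noncomputable section

variable {K V : Type*} [Field K] [AddCommGroup V] [Module K V]

private lemma key_lemma {n : ℕ} {B C : Module.End K V} {μ : Fin (n+1) → K}
    {F : Fin (n+1) → Module.End K V}
    (hsup : (⨆ i, B.eigenspace (μ i)) = ⊤)
    (hon : ∀ i, ∀ v ∈ B.eigenspace (μ i), F i v = v)
    (hoff : ∀ i j, j ≠ i → ∀ v ∈ B.eigenspace (μ j), F i v = 0)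
    (htri : ∀ i : Fin (n+1), ∀ v ∈ B.eigenspace (μ i),
      C v ∈ ⨆ j ∈ {j : Fin (n+1) | i.1 ≤ j.1 + 1 ∧ j.1 ≤ i.1 + 1}, B.eigenspace (μ j))
    {i j : Fin (n+1)} {t : ℕ} (h : t < Nat.dist i.1 j.1) :
    F i * C ^ t * F j = 0 := by
  have hFj : ∀ v : V, F j v ∈ B.eigenspace (μ j) := by
    intro v
    have hv : v ∈ ⨆ i, B.eigenspace (μ i) := hsup ▸ Submodule.mem_top
    refine Submodule.iSup_induction (motive := fun w => F j w ∈ B.eigenspace (μ j)) _ hv ?_ ?_ ?_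
    · intro k x hx
      by_cases hk : k = j
      · subst hk; rw [hon k x hx]; exact hx
      · rw [hoff j k hk x hx]; exact Submodule.zero_mem _
    · simp
    · intro x y hx hy; rw [map_add]; exact Submodule.add_mem _ hx hy
  have hpow : ∀ (s : ℕ) (k : Fin (n+1)) (v : V), v ∈ B.eigenspace (μ k) →
      (C ^ s) v ∈ ⨆ l, ⨆ (_ : Nat.dist l.1 k.1 ≤ s), B.eigenspace (μ l) := by
    intro s
    induction s with
    | zero =>
      intro k v hv
      rw [pow_zero]
      exact Submodule.mem_iSup_of_mem k (Submodule.mem_iSup_of_mem (by simp [Nat.dist]) hv)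
    | succ s ih =>
      intro k v hv
      rw [pow_succ', Module.End.mul_apply]
      have hv' := ih k v hv
      refine Submodule.iSup_induction
        (motive := fun w => C w ∈ ⨆ l, ⨆ (_ : Nat.dist l.1 k.1 ≤ s+1), B.eigenspace (μ l)) _ hv' ?_ ?_ ?_
      · intro m x hx
        by_cases hm : Nat.dist m.1 k.1 ≤ s
        · rw [iSup_pos hm] at hx
          have hle : (⨆ l ∈ {l : Fin (n+1) | m.1 ≤ l.1+1 ∧ l.1 ≤ m.1+1}, B.eigenspace (μ l)) ≤
              ⨆ l, ⨆ (_ : Nat.dist l.1 k.1 ≤ s+1), B.eigenspace (μ l) := by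
            refine iSup₂_le fun l hl => ?_
            have hd : Nat.dist l.1 k.1 ≤ s+1 := by
              simp only [Set.mem_setOf_eq] at hl
              unfold Nat.dist at *; omega
            exact le_iSup₂ (f := fun l (_ : Nat.dist l.1 k.1 ≤ s+1) => B.eigenspace (μ l)) l hd
          exact hle (htri m x hx)
        · rw [iSup_neg hm, Submodule.mem_bot] at hx
          rw [hx, map_zero]; exact Submodule.zero_mem _
      · show C 0 ∈ _
        rw [map_zero]; exact Submodule.zero_mem _
      · intro x y hx hy
        show C (x+y) ∈ _
        rw [map_add]; exact Submodule.add_mem _ hx hy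
  apply LinearMap.ext
  intro v
  simp only [Module.End.mul_apply, LinearMap.zero_apply]
  have h2 := hpow t j (F j v) (hFj v)
  refine Submodule.iSup_induction (motive := fun w => F i w = 0) _ h2 ?_ ?_ ?_
  · intro m x hx
    by_cases hm : Nat.dist m.1 j.1 ≤ t
    · rw [iSup_pos hm] at hx
      have hne : m ≠ i := by
        rintro rfl
        exact absurd hm (by omega)
      exact hoff i m hne x hx
    · rw [iSup_neg hm, Submodule.mem_bot] at hx
      rw [hx, map_zero]
  · exact map_zero _
  · intro x y hx hy; rw [map_add, hx, hy, add_zero]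



/-- Lemma 6.3: `R` is contained in the kernel of `π`. -/
theorem R_le_ker_pi
    [FiniteDimensional K V] (hV : 0 < Module.finrank K V) (S : TDSystem K V)
    (π : S.TT →ₗ[K] Module.End K V)
    (hπ : ∀ (X : S.Dalg) (Y : S.DstarAlg) (Z : S.Dalg),
      π (X ⊗ₜ[K] Y ⊗ₜ[K] Z) = S.Estar 0 * X * Y * Z * S.Estar 0) :
    S.Rspace ≤ LinearMap.ker π := by
  rw [TDSystem.Rspace]
  refine sup_le (sup_le ?_ ?_) ?_
  · rw [TDSystem.Lspace, Submodule.span_le]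
    rintro x ⟨i, j, Z, hij, rfl⟩
    simp only [SetLike.mem_coe, LinearMap.mem_ker]
    rw [hπ]
    have hkey : S.Estar 0 * S.A ^ i * S.Estar j = 0 :=
      key_lemma S.sup_eigstar S.Estar_on_eig S.Estar_off_eig S.tridiagstar
        (i := 0) (j := j) (t := i) (by unfold Nat.dist; simp; omega)
    have hc : ((S.a ^ i : S.Dalg) : Module.End K V) = S.A ^ i := by
      rw [SubmonoidClass.coe_pow]; rfl
    have hc2 : ((S.EstarElt j : S.DstarAlg) : Module.End K V) = S.Estar j := rfl
    rw [hc, hc2, hkey, zero_mul, zero_mul]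
  · rw [TDSystem.Rright, Submodule.span_le]
    rintro x ⟨X, i, j, hij, rfl⟩
    simp only [SetLike.mem_coe, LinearMap.mem_ker]
    rw [hπ]
    have hkey : S.Estar j * S.A ^ i * S.Estar 0 = 0 :=
      key_lemma S.sup_eigstar S.Estar_on_eig S.Estar_off_eig S.tridiagstar
        (i := j) (j := 0) (t := i) (by unfold Nat.dist; simp; omega)
    have hc : ((S.a ^ i : S.Dalg) : Module.End K V) = S.A ^ i := by
      rw [SubmonoidClass.coe_pow]; rfl
    have hc2 : ((S.EstarElt j : S.DstarAlg) : Module.End K V) = S.Estar j := rfl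
    rw [hc, hc2,
      show S.Estar 0 * (X : Module.End K V) * S.Estar j * S.A ^ i * S.Estar 0 =
        S.Estar 0 * (X : Module.End K V) * (S.Estar j * S.A ^ i * S.Estar 0) by
          noncomm_ring,
      hkey, mul_zero]
  · rw [TDSystem.Mspace, Submodule.span_le]
    rintro x ⟨i, j, t, htd, hij, rfl⟩
    simp only [SetLike.mem_coe, LinearMap.mem_ker]
    rw [hπ]
    have hkey : S.E i * S.Astar ^ t * S.E j = 0 :=
      key_lemma S.sup_eig S.E_on_eig S.E_off_eig S.tridiag hij
    have hc : ((S.astar ^ t : S.DstarAlg) : Module.End K V) = S.Astar ^ t := by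
      rw [SubmonoidClass.coe_pow]; rfl
    have hc2 : ((S.Eelt i : S.Dalg) : Module.End K V) = S.E i := rfl
    have hc3 : ((S.Eelt j : S.Dalg) : Module.End K V) = S.E j := rfl
    rw [hc, hc2, hc3,
      show S.Estar 0 * S.E i * S.Astar ^ t * S.E j * S.Estar 0 =
        S.Estar 0 * (S.E i * S.Astar ^ t * S.E j) * S.Estar 0 by noncomm_ring,
      hkey, mul_zero, zero_mul]


end
end
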